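/- arXiv:0802.1982 — 5 statements merged into one kernel-verified Lean document; each statement's English description precedes it below -/
import Mathlib

section
/- Let A be an n×n matrix over ℤ/2 all of whose proper principal minors are 1. If det A = 1, then A is conjugate by a permutation matrix to an upper triangular matrix with all diagonal entries equal to 1. -/
/-!
Over `ZMod 2` a determinant counts, mod 2, the permutations `σ` with `A (σ i) i = 1` for all `i`;
once the diagonal is `1` (the `1 × 1` minors), the principal minor on `s` counts those moving
only points of `s`. Read `A b a = 1` as an edge `a → b`, so that such a permutation is a union of
disjoint directed cycles. If there were a non-identity one, take one, `σ`, moving the fewest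
points: the minor on its support is odd and counts both `1` and `σ`, so a third one `τ` has the
same support. Following `σ` but leaving `i₀` along `τ`, where the two differ, never reaches
`σ i₀`, so it closes up into a cycle on fewer points. Hence the graph is acyclic, it has a
topological order `ν`, and conjugating by `ν` makes `A` unitriangular.
-/

open Matrix

/-- The principal minor of `A` indexed by the subset `s` (rows and columns). -/
def pminor {m : Type*} [Fintype m] [DecidableEq m] {R : Type*} [CommRing R]
    (A : Matrix m m R) (s : Finset m) : R :=
  (A.submatrix (fun i : s => (i : m)) (fun j : s => (j : m))).det

open Equiv Finset

theorem ZMod.two_eq_zero_or_eq_one (x : ZMod 2) : x = 0 ∨ x = 1 := by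
  revert x; decide

theorem Matrix.det_zmod_two_eq_card {ι : Type*} [Fintype ι] [DecidableEq ι]
    (M : Matrix ι ι (ZMod 2)) : M.det = #{σ : Perm ι | ∀ i, M (σ i) i = 1} := by
  have hentry : ∀ i j, M i j = if M i j = 1 then 1 else 0 := fun i j => by
    rcases ZMod.two_eq_zero_or_eq_one (M i j) with h | h <;> simp [h]
  have hsign : ∀ σ : Perm ι, ((Perm.sign σ : ℤ) : ZMod 2) = 1 := fun σ => by
    rcases Int.units_eq_one_or (Perm.sign σ) with h | h <;> simp [h]
  rw [det_apply, ← sum_boole]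
  refine sum_congr rfl fun σ _ => ?_
  rw [Units.smul_def, zsmul_eq_mul, hsign, one_mul, ← Fintype.prod_boole]
  exact Fintype.prod_congr _ _ fun i => hentry _ _

theorem pminor_univ {m R : Type*} [Fintype m] [DecidableEq m] [CommRing R] (A : Matrix m m R) :
    pminor A univ = A.det :=
  det_submatrix_equiv_self (Equiv.subtypeUnivEquiv mem_univ) A

theorem pminor_singleton {m R : Type*} [Fintype m] [DecidableEq m] [CommRing R]
    (A : Matrix m m R) (i : m) : pminor A {i} = A i i := by
  simp [pminor]

theorem pminor_zmod_two_eq_card {m : Type*} [Fintype m] [DecidableEq m]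
    {A : Matrix m m (ZMod 2)} (hdiag : ∀ i, A i i = 1) (s : Finset m) :
    pminor A s = #{τ : Perm m | τ.support ⊆ s ∧ ∀ i, A (τ i) i = 1} := by
  rw [pminor, det_zmod_two_eq_card]
  congr 1
  refine card_bij (fun σ _ => Perm.ofSubtype σ) (fun σ hσ => ?_)
    (fun σ _ σ' _ h => Perm.ofSubtype_injective h) (fun τ hτ => ?_)
  · rw [mem_filter_univ] at hσ ⊢
    refine ⟨fun i hi => ?_, fun i => ?_⟩
    · exact ((Perm.mem_support_ofSubtype i σ).mp hi).1
    · by_cases hi : i ∈ s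
      · rw [Perm.ofSubtype_apply_of_mem σ hi]; exact hσ ⟨i, hi⟩
      · rw [Perm.ofSubtype_apply_of_not_mem σ hi]; exact hdiag i
  · obtain ⟨hsupp, hτ⟩ := mem_filter_univ _ |>.mp hτ
    refine ⟨τ.subtypePerm (Perm.isInvariant_of_support_le hsupp), ?_,
      Perm.ofSubtype_subtypePerm _ fun x hx => hsupp (Perm.mem_support.mpr hx)⟩
    exact mem_filter_univ _ |>.mpr fun i => hτ i

theorem Matrix.inv_permMatrix_mul_mul_permMatrix {n R : Type*} [Fintype n] [DecidableEq n]
    [CommRing R] (μ : Perm n) (A : Matrix n n R) :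
    (μ.permMatrix R)⁻¹ * A * μ.permMatrix R = A.submatrix ⇑μ⁻¹ ⇑μ⁻¹ := by
  have hinv : (μ.permMatrix R)⁻¹ = (μ⁻¹).permMatrix R :=
    inv_eq_left_inv (by rw [← permMatrix_mul, mul_inv_cancel, permMatrix_one])
  rw [hinv, PEquiv.toMatrix_toPEquiv_mul, PEquiv.mul_toMatrix_toPEquiv, submatrix_submatrix]
  rfl

theorem Equiv.Perm.exists_ne_one_of_mapsTo {α : Type*} [Fintype α] [DecidableEq α]
    (f : α → α) (t : Finset α) (ht : t.Nonempty) (hmaps : ∀ y ∈ t, f y ∈ t)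
    (hfix : ∀ y ∈ t, f y ≠ y) :
    ∃ ρ : Perm α, ρ ≠ 1 ∧ (∀ y, ρ y = y ∨ ρ y = f y) ∧ ρ.support ⊆ t := by
  induction t using Finset.strongInduction with
  | H t ih =>
  have himage_sub : t.image f ⊆ t := image_subset_iff.mpr hmaps
  by_cases himage : t.image f = t
  · have hbij : Set.BijOn f t t := by
      refine (t.finite_toSet.surjOn_iff_bijOn_of_mapsTo hmaps).mp fun y hy => ?_
      rwa [← himage, coe_image] at hy
    set ρ := Perm.ofSubtype (hbij.equiv f)
    have hρ_mem : ∀ y ∈ t, ρ y = f y := fun y hy =>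
      Perm.ofSubtype_apply_of_mem _ (p := (· ∈ (t : Set α))) hy
    have hρ_not_mem : ∀ y ∉ t, ρ y = y := fun y hy => Perm.ofSubtype_apply_of_not_mem _ hy
    obtain ⟨y, hy⟩ := ht
    refine ⟨ρ, fun h => hfix y hy ?_, fun x => ?_, fun x hx => ?_⟩
    · rw [← hρ_mem y hy, h, Perm.one_apply]
    · by_cases hx : x ∈ t
      · exact .inr (hρ_mem x hx)
      · exact .inl (hρ_not_mem x hx)
    · by_contra hxt
      exact Perm.mem_support.mp hx (hρ_not_mem x hxt)
  · obtain ⟨ρ, hρ, hρf, hρt⟩ := ih (t.image f) (ssubset_of_subset_of_ne himage_sub himage)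
      (ht.image f) (fun y hy => mem_image_of_mem f (himage_sub hy))
      (fun y hy => hfix y (himage_sub hy))
    exact ⟨ρ, hρ, hρf, hρt.trans himage_sub⟩

theorem Equiv.Perm.exists_card_support_lt_of_support_eq {α : Type*} [Fintype α] [DecidableEq α]
    {r : α → α → Prop} (hr : ∀ a, r a a) {σ τ : Perm α} (hσ : ∀ i, r (σ i) i)
    (hτ : ∀ i, r (τ i) i) (hne : τ ≠ σ) (hsupp : τ.support = σ.support) :
    ∃ ρ : Perm α, ρ ≠ 1 ∧ (∀ i, r (ρ i) i) ∧ #ρ.support < #σ.support := by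
  obtain ⟨i₀, hi₀⟩ := DFunLike.ne_iff.mp hne
  have hi₀σ : i₀ ∈ σ.support := by
    by_contra h
    exact hi₀ ((Perm.notMem_support.mp (hsupp ▸ h)).trans (Perm.notMem_support.mp h).symm)
  have hi₀τ : i₀ ∈ τ.support := hsupp ▸ hi₀σ
  set f := Function.update σ i₀ (τ i₀)
  have hf_ne : ∀ y, f y ≠ σ i₀ := fun y => by
    rcases eq_or_ne y i₀ with rfl | hy
    · simpa [f] using hi₀
    · simp [f, hy, σ.injective.ne hy]
  obtain ⟨ρ, hρ1, hρf, hρs⟩ := Perm.exists_ne_one_of_mapsTo f σ.support ⟨i₀, hi₀σ⟩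
    (fun y hy => by
      rcases eq_or_ne y i₀ with rfl | hy'
      · simpa [f, ← hsupp] using hi₀τ
      · simpa [f, hy'] using hy)
    (fun y hy => by
      rcases eq_or_ne y i₀ with rfl | hy'
      · simpa [f] using hi₀τ
      · simpa [f, hy'] using hy)
  refine ⟨ρ, hρ1, fun i => ?_, card_lt_card ((ssubset_iff_of_subset hρs).mpr ?_)⟩
  · rcases hρf i with h | h <;> rw [h]
    · exact hr i
    · rcases eq_or_ne i i₀ with rfl | hi
      · simpa [f] using hτ i
      · simpa [f, hi] using hσ i
  · refine ⟨σ i₀, Perm.apply_mem_support.mpr hi₀σ, fun h => ?_⟩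
    rcases hρf (ρ.symm (σ i₀)) with h' | h' <;> rw [Equiv.apply_symm_apply] at h'
    · exact Perm.mem_support.mp h (ρ.eq_symm_apply.mp h')
    · exact hf_ne _ h'.symm

theorem exists_mem_forall_rel_imp_eq {α : Type*} [Fintype α] [DecidableEq α]
    {r : α → α → Prop} (hr : ∀ a, r a a) (hacyc : ∀ σ : Perm α, (∀ i, r (σ i) i) → σ = 1)
    {t : Finset α} (ht : t.Nonempty) : ∃ a ∈ t, ∀ b ∈ t, r b a → b = a := by
  by_contra! h
  choose g hgt hgr hgne using h
  let f a := if ha : a ∈ t then g a ha else a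
  obtain ⟨ρ, hρ1, hρf, -⟩ := Perm.exists_ne_one_of_mapsTo f t ht
    (fun a ha => by simp [f, ha, hgt]) (fun a ha => by simp [f, ha, hgne])
  refine hρ1 (hacyc ρ fun i => ?_)
  rcases hρf i with h | h <;> rw [h]
  · exact hr i
  · by_cases hi : i ∈ t <;> simp [f, hi, hgr, hr]

theorem List.exists_nodup_toFinset_eq_pairwise {α : Type*} [DecidableEq α] (r : α → α → Prop)
    (hsrc : ∀ t : Finset α, t.Nonempty → ∃ a ∈ t, ∀ b ∈ t, r b a → b = a) (t : Finset α) :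
    ∃ l : List α, l.Nodup ∧ l.toFinset = t ∧ l.Pairwise (fun a b => ¬ r b a) := by
  induction t using Finset.strongInduction with
  | H t ih =>
  rcases t.eq_empty_or_nonempty with rfl | ht
  · exact ⟨[], List.nodup_nil, rfl, List.Pairwise.nil⟩
  obtain ⟨a, hat, ha⟩ := hsrc t ht
  obtain ⟨l, hnodup, hl, hpair⟩ := ih (t.erase a) (erase_ssubset hat)
  have hmem : ∀ b ∈ l, b ∈ t ∧ b ≠ a := fun b hb => by
    have hb' : b ∈ t.erase a := hl ▸ List.mem_toFinset.mpr hb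
    exact ⟨Finset.mem_of_mem_erase hb', Finset.ne_of_mem_erase hb'⟩
  refine ⟨a :: l, List.nodup_cons.mpr ⟨fun h => (hmem a h).2 rfl, hnodup⟩, ?_,
    List.pairwise_cons.mpr ⟨fun b hb hba => (hmem b hb).2 (ha b (hmem b hb).1 hba), hpair⟩⟩
  rw [List.toFinset_cons, hl, insert_erase hat]

theorem Fin.exists_perm_forall_lt_not_rel {n : ℕ} (r : Fin n → Fin n → Prop)
    (hsrc : ∀ t : Finset (Fin n), t.Nonempty → ∃ a ∈ t, ∀ b ∈ t, r b a → b = a) :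
    ∃ ν : Perm (Fin n), ∀ i j, j < i → ¬ r (ν i) (ν j) := by
  obtain ⟨l, hnodup, hl, hpair⟩ := List.exists_nodup_toFinset_eq_pairwise r hsrc univ
  have hmem : ∀ x, x ∈ l := fun x => List.mem_toFinset.mp (hl ▸ mem_univ x)
  have hlen : l.length = n := by
    rw [← List.toFinset_card_of_nodup hnodup, hl, card_univ, Fintype.card_fin]
  refine ⟨(finCongr hlen).symm.trans (List.Nodup.getEquivOfForallMemList l hnodup hmem),
    fun i j hji => ?_⟩
  exact List.pairwise_iff_get.mp hpair _ _ hji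

theorem exists_perm_ne_of_pminor_eq_one {m : Type*} [Fintype m] [DecidableEq m]
    {A : Matrix m m (ZMod 2)} (hdiag : ∀ i, A i i = 1) {s : Finset m} (hs : pminor A s = 1)
    {σ : Perm m} (hσ1 : σ ≠ 1) (hσs : σ.support ⊆ s) (hσ : ∀ i, A (σ i) i = 1) :
    ∃ τ : Perm m, τ ≠ 1 ∧ τ ≠ σ ∧ τ.support ⊆ s ∧ ∀ i, A (τ i) i = 1 := by
  by_contra h
  have hpair : ({τ : Perm m | τ.support ⊆ s ∧ ∀ i, A (τ i) i = 1} : Finset _) = {1, σ} := by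
    ext τ
    simp only [mem_filter_univ, mem_insert, mem_singleton]
    refine ⟨fun ⟨hτs, hτ⟩ => ?_, ?_⟩
    · by_contra! hτ'
      exact h ⟨τ, hτ'.1, hτ'.2, hτs, hτ⟩
    · rintro (rfl | rfl)
      · simp [hdiag]
      · exact ⟨hσs, hσ⟩
  rw [pminor_zmod_two_eq_card hdiag, hpair, card_pair hσ1.symm] at hs
  exact absurd hs (by decide)

theorem eq_one_of_forall_pminor_eq_one {m : Type*} [Fintype m] [DecidableEq m]
    {A : Matrix m m (ZMod 2)} (hall : ∀ s, pminor A s = 1) (σ : Perm m)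
    (hσ : ∀ i, A (σ i) i = 1) : σ = 1 := by
  have hdiag : ∀ i, A i i = 1 := fun i => pminor_singleton A i ▸ hall {i}
  by_contra hσ1
  obtain ⟨σ₀, hσ₀, hmin⟩ := exists_min_image {τ : Perm m | τ ≠ 1 ∧ ∀ i, A (τ i) i = 1}
    (fun τ => #τ.support) ⟨σ, mem_filter_univ _ |>.mpr ⟨hσ1, hσ⟩⟩
  simp only [mem_filter_univ, and_imp] at hσ₀ hmin
  obtain ⟨τ, hτ1, hτσ, hτs, hτ⟩ :=
    exists_perm_ne_of_pminor_eq_one hdiag (hall σ₀.support) hσ₀.1 subset_rfl hσ₀.2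
  obtain ⟨ρ, hρ1, hρ, hlt⟩ := Perm.exists_card_support_lt_of_support_eq
    (r := fun b a => A b a = 1) hdiag hσ₀.2 hτ hτσ (eq_of_subset_of_card_le hτs (hmin τ hτ1 hτ))
  exact (hmin ρ hρ1 hρ).not_gt hlt

theorem stmt_0 {n : ℕ} (A : Matrix (Fin n) (Fin n) (ZMod 2))
    (hproper : ∀ s : Finset (Fin n), s ≠ Finset.univ → pminor A s = 1)
    (hdet : A.det = 1) :
    ∃ (μ : Equiv.Perm (Fin n)) (U : Matrix (Fin n) (Fin n) (ZMod 2)),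
      U.BlockTriangular id ∧ (∀ i, U i i = 1) ∧
      (μ.permMatrix (ZMod 2))⁻¹ * A * μ.permMatrix (ZMod 2) = U := by
  have hall : ∀ s, pminor A s = 1 := fun s => by
    by_cases hs : s = univ
    · rw [hs, pminor_univ, hdet]
    · exact hproper s hs
  have hdiag : ∀ i, A i i = 1 := fun i => pminor_singleton A i ▸ hall {i}
  obtain ⟨ν, hν⟩ := Fin.exists_perm_forall_lt_not_rel (fun b a => A b a = 1)
    fun t ht => exists_mem_forall_rel_imp_eq hdiag (eq_one_of_forall_pminor_eq_one hall) ht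
  refine ⟨ν⁻¹, A.submatrix ν ν, fun i j hji => ?_, fun i => hdiag (ν i), ?_⟩
  · exact (ZMod.two_eq_zero_or_eq_one _).resolve_right (hν i j hji)
  · rw [inv_permMatrix_mul_mul_permMatrix, inv_inv]
end

section
/- A finite simple digraph G on n labeled vertices (with at most one edge from i to j for each ordered pair, and no loops) is acyclic if and only if the matrix Eₙ + A(G) over ℤ/2, where A(G) is the adjacency matrix of G, has all principal minors equal to 1. -/
open Matrix

/-- Adjacency matrix over `ZMod 2` of a digraph on `n` labeled vertices. -/
def adjMat {n : ℕ} (G : Fin n → Fin n → Bool) : Matrix (Fin n) (Fin n) (ZMod 2) :=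
  Matrix.of fun i j => if G i j then 1 else 0

/-- A digraph is acyclic if it has no directed cycle (of any length). -/
def IsAcyclicDigraph {n : ℕ} (G : Fin n → Fin n → Bool) : Prop :=
  ∀ i, ¬ Relation.TransGen (fun a b => G a b = true) i i

/-!
The edge relation of a finite acyclic digraph is well-founded, so in the Leibniz expansion of a
principal minor of `1 + A(G)` every permutation other than the identity meets a zero entry: the
minor equals its diagonal product `1`. Conversely, if `G` has a directed cycle, take one of minimal
length: every vertex `x` of it has exactly one out-neighbour among the vertices of the cycle, since
any other edge from `x` into the cycle would shortcut it. Hence each row of the corresponding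
principal submatrix of `1 + A(G)` contains exactly two ones, so over `ZMod 2` the all-ones vector
lies in its kernel and the principal minor vanishes.
-/

open Finset Relation

namespace Matrix

variable {m R : Type*} [Fintype m] [DecidableEq m] [CommRing R]

/-- A permutation `σ ≠ 1` sends an `r`-minimal index `i` with `σ i ≠ i` to an index which is also
moved, so `M (σ i) i = 0` by minimality. -/
theorem det_eq_prod_diag_of_wellFounded {r : m → m → Prop} (hr : WellFounded r)
    (M : Matrix m m R) (hM : ∀ i j, i ≠ j → M i j ≠ 0 → r i j) : M.det = ∏ i, M i i := by
  rw [det_apply, Finset.sum_eq_single 1 _ (by simp)]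
  · simp
  intro σ _ hσ
  obtain ⟨i, hi, hmin⟩ := hr.has_min {i | σ i ≠ i}
    (by simpa [Set.Nonempty, Equiv.ext_iff] using hσ)
  have hzero : M (σ i) i = 0 := by
    by_contra h
    exact hmin (σ i) (σ.injective.ne hi) (hM _ _ hi h)
  rw [Finset.prod_eq_zero (Finset.mem_univ i) (f := fun j => M (σ j) j) hzero, smul_zero]

theorem det_eq_zero_of_sum_row_eq_zero [Nonempty m] (M : Matrix m m R)
    (h : ∀ i, ∑ j, M i j = 0) : M.det = 0 := by
  inhabit m
  refine det_eq_zero_of_mulVec_eq_zero_of_mem_nonZeroDivisors (v := 1) ?_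
    (i := default) (by simp [one_mem])
  ext i
  simpa [mulVec, dotProduct] using h i

end Matrix

section ClosedWalk

variable {α : Type*} {r : α → α → Prop}

/-- A closed walk of length `k`, encoded as a `k`-periodic sequence so that rotating it is just
shifting the index. -/
structure IsClosedWalk (r : α → α → Prop) (k : ℕ) (c : ℕ → α) : Prop where
  pos : 0 < k
  periodic : Function.Periodic c k
  rel_succ : ∀ i, r (c i) (c (i + 1))

theorem isClosedWalk_mod {k : ℕ} {p : ℕ → α} (hk : 0 < k)
    (hp : ∀ i, i + 1 < k → r (p i) (p (i + 1))) (hclose : r (p (k - 1)) (p 0)) :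
    IsClosedWalk r k (fun t => p (t % k)) where
  pos := hk
  periodic t := by simp
  rel_succ t := by
    have hlt := Nat.mod_lt t hk
    simp only [← Nat.mod_add_mod t k 1]
    rcases Nat.lt_or_ge (t % k + 1) k with h | h
    · rw [Nat.mod_eq_of_lt h]
      exact hp _ h
    · rw [show t % k + 1 = k by omega, Nat.mod_self, show t % k = k - 1 by omega]
      exact hclose

theorem exists_path_of_transGen {a b : α} (h : TransGen r a b) :
    ∃ (k : ℕ) (p : ℕ → α), 0 < k ∧ p 0 = a ∧ p k = b ∧ ∀ i < k, r (p i) (p (i + 1)) := by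
  induction h with
  | single hab => exact ⟨1, fun i => if i = 0 then a else _, one_pos, rfl, rfl, by simpa⟩
  | @tail b c _ hbc ih =>
    obtain ⟨k, p, hk, hp0, hpk, hp⟩ := ih
    refine ⟨k + 1, fun i => if i ≤ k then p i else c, k.succ_pos, by simpa, by simp, ?_⟩
    intro i hi
    rcases Nat.lt_or_ge i k with h | h
    · simpa [h.le, Nat.succ_le_of_lt h] using hp i h
    · simpa [show i = k by omega, hpk] using hbc

theorem exists_isClosedWalk_of_transGen {a : α} (h : TransGen r a a) :
    ∃ k c, IsClosedWalk r k c := by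
  obtain ⟨k, p, hk, hp0, hpk, hp⟩ := exists_path_of_transGen h
  refine ⟨k, _, isClosedWalk_mod hk (fun i hi => hp i (by omega)) ?_⟩
  have hlast := hp (k - 1) (by omega)
  rwa [Nat.sub_add_cancel hk, hpk, ← hp0] at hlast

namespace IsClosedWalk

variable {k : ℕ} {c : ℕ → α}

/-- Taking the edge `c i → c (i + 1 + m)` instead of the `m + 1` steps of `c` from `c i`. -/
theorem shortcut (hc : IsClosedWalk r k c) {i m : ℕ} (hm : m < k)
    (h : r (c i) (c (i + 1 + m))) :
    IsClosedWalk r (k - m) (fun t => c (i + 1 + m + t % (k - m))) :=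
  isClosedWalk_mod (p := fun t => c (i + 1 + m + t)) (by omega)
    (fun t _ => by simpa only [add_assoc] using hc.rel_succ (i + 1 + m + t))
    (by rwa [show i + 1 + m + (k - m - 1) = i + k by omega, hc.periodic, add_zero])

theorem eq_zero_of_rel_of_minimal (hc : IsClosedWalk r k c)
    (hmin : ∀ k' c', IsClosedWalk r k' c' → k ≤ k') {i m : ℕ} (hm : m < k)
    (h : r (c i) (c (i + 1 + m))) : m = 0 := by
  have := hmin _ _ (hc.shortcut hm h)
  omega

end IsClosedWalk

theorem exists_finset_existsUnique_rel_of_transGen {a : α} (h : TransGen r a a) :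
    ∃ s : Finset α, s.Nonempty ∧ ∀ x ∈ s, ∃! y, y ∈ s ∧ r x y := by
  classical
  have hex := exists_isClosedWalk_of_transGen h
  obtain ⟨c, hc⟩ := Nat.find_spec hex
  set k := Nat.find hex
  have hmin : ∀ k' c', IsClosedWalk r k' c' → k ≤ k' :=
    fun k' c' h => Nat.find_min' hex ⟨c', h⟩
  refine ⟨(range k).image c, ⟨c 0, mem_image_of_mem _ (mem_range.2 hc.pos)⟩, ?_⟩
  simp only [mem_image, mem_range]
  rintro _ ⟨i, hi, rfl⟩
  refine ⟨c (i + 1), ⟨⟨(i + 1) % k, Nat.mod_lt _ hc.pos, hc.periodic.map_mod_nat _⟩,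
    hc.rel_succ i⟩, ?_⟩
  rintro _ ⟨⟨j, hj, rfl⟩, hij⟩
  rcases Nat.lt_or_ge i j with hlt | hle
  · have := hc.eq_zero_of_rel_of_minimal hmin (m := j - i - 1) (by omega)
      (by rwa [show i + 1 + (j - i - 1) = j by omega])
    congr 1
    omega
  · have := hc.eq_zero_of_rel_of_minimal hmin (m := j + k - i - 1) (by omega)
      (by rwa [show i + 1 + (j + k - i - 1) = j + k by omega, hc.periodic])
    rw [← hc.periodic j, show j + k = i + 1 by omega]

end ClosedWalk

section Digraph

variable {n : ℕ} {G : Fin n → Fin n → Bool}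

theorem IsAcyclicDigraph.wellFounded (hG : IsAcyclicDigraph G) :
    WellFounded (fun a b => G a b = true) :=
  have : Std.Irrefl (TransGen fun a b => G a b = true) := ⟨hG⟩
  (Finite.wellFounded_of_trans_of_irrefl (TransGen fun a b => G a b = true)).mono
    fun _ _ h => TransGen.single h

theorem IsAcyclicDigraph.pminor_one_add_adjMat (hG : IsAcyclicDigraph G) (s : Finset (Fin n)) :
    pminor (1 + adjMat G) s = 1 := by
  have hloop (i : Fin n) : G i i = false := by
    simpa using fun h => hG i (TransGen.single h)
  rw [pminor, det_eq_prod_diag_of_wellFounded (InvImage.wf Subtype.val hG.wellFounded)]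
  · simp [adjMat, hloop]
  · intro i j hij hne
    have hij' : (i : Fin n) ≠ j := Subtype.coe_injective.ne hij
    show G i j = true
    simpa [adjMat, one_apply_ne hij'] using hne

theorem pminor_one_add_adjMat_eq_zero {s : Finset (Fin n)} (hs : s.Nonempty)
    (hodd : ∀ x ∈ s, Odd #{y ∈ s | G x y}) : pminor (1 + adjMat G) s = 0 := by
  have := hs.to_subtype
  refine det_eq_zero_of_sum_row_eq_zero _ fun ⟨x, hx⟩ => ?_
  calc ∑ y : s, (1 + adjMat G) x y
      = ∑ y ∈ s, ((if x = y then 1 else 0) + if G x y then 1 else 0) :=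
        Finset.sum_coe_sort s fun y => (1 + adjMat G) x y
    _ = 1 + 1 := by
        rw [Finset.sum_add_distrib, Finset.sum_ite_eq, if_pos hx, Finset.sum_boole,
          (hodd x hx).natCast_zmod_two]
    _ = 0 := CharTwo.add_self_eq_zero 1

end Digraph

theorem stmt_2_general {n : ℕ} (G : Fin n → Fin n → Bool) :
    IsAcyclicDigraph G ↔ ∀ s : Finset (Fin n), pminor (1 + adjMat G) s = 1 := by
  refine ⟨fun hG => hG.pminor_one_add_adjMat, fun hminor i hcycle => ?_⟩
  obtain ⟨s, hs, hsucc⟩ := exists_finset_existsUnique_rel_of_transGen hcycle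
  have hodd (x : Fin n) (hx : x ∈ s) : Odd #{y ∈ s | G x y} := by
    obtain ⟨y, hy, hyu⟩ := hsucc x hx
    rw [card_eq_one.mpr ⟨y, by ext z; simpa using ⟨hyu z, fun h => h ▸ hy⟩⟩]
    exact odd_one
  have := hminor s
  rw [pminor_one_add_adjMat_eq_zero hs hodd] at this
  exact zero_ne_one this

theorem stmt_2 {n : ℕ} (G : Fin n → Fin n → Bool) (hloop : ∀ i, G i i = false) :
    IsAcyclicDigraph G ↔ ∀ s : Finset (Fin n), pminor (1 + adjMat G) s = 1 :=
  stmt_2_general G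
end

section
/- Let A be an n×n real matrix with entries in {0,1} such that every principal minor of A is an odd integer. Then every principal minor of A equals 1. -/
open Matrix

/-!
Write `i → j` when `i ≠ j` and `A i j = 1`. In the Leibniz expansion of a principal minor of a
`0`/`1` matrix the nonzero terms are `±1` and come from the permutations sending every index to
itself or along an arrow, so the minor is congruent mod `2` to the number of these permutations.
The `1 × 1` minors force a unit diagonal, so the identity always counts.

If `→` had a closed walk, take a shortest one, of length `ℓ ≥ 2`. Its vertices are distinct, and a
nontrivial permutation of them moving along arrows has only cycles of length `ℓ`, since each cycle
is a closed walk; two different such `ℓ`-cycles would give a shortcut. So only the identity and the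
rotation along the walk count, and the minor on these vertices is even. Hence `→` is acyclic, the
identity is the only permutation that counts, and every principal minor is `1`.
-/

open Equiv Finset

def HasClosedWalk {α : Type*} (r : α → α → Prop) (ℓ : ℕ) : Prop :=
  ∃ f : ℕ → α, f ℓ = f 0 ∧ ∀ k < ℓ, r (f k) (f (k + 1))

def GirthAtLeast {α : Type*} (r : α → α → Prop) (ℓ : ℕ) : Prop :=
  ∀ k, 0 < k → HasClosedWalk r k → ℓ ≤ k

section ClosedWalk

variable {α β : Type*} {r : α → α → Prop} {ℓ : ℕ}

theorem HasClosedWalk.map {s : β → β → Prop} (g : α → β) (hg : ∀ a b, r a b → s (g a) (g b))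
    (h : HasClosedWalk r ℓ) : HasClosedWalk s ℓ :=
  let ⟨f, hf0, hf⟩ := h
  ⟨g ∘ f, congrArg g hf0, fun k hk => hg _ _ (hf k hk)⟩

theorem GirthAtLeast.comap {s : β → β → Prop} (h : GirthAtLeast s ℓ) (g : α → β) :
    GirthAtLeast (fun a b => s (g a) (g b)) ℓ :=
  fun k hk hwalk => h k hk (hwalk.map g fun _ _ => id)

theorem GirthAtLeast.injOn {f : ℕ → α} (hgirth : GirthAtLeast r ℓ)
    (hf : ∀ k < ℓ, r (f k) (f (k + 1))) : Set.InjOn f (Set.Iio ℓ) := by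
  intro a ha b hb hab
  by_contra hne
  wlog hlt : a < b generalizing a b
  · exact this hb ha hab.symm (Ne.symm hne) (by omega)
  simp only [Set.mem_Iio] at hb
  have := hgirth (b - a) (by omega)
    ⟨fun k => f (a + k), by simp [Nat.add_sub_cancel' hlt.le, hab],
      fun k hk => hf (a + k) (by omega)⟩
  omega

end ClosedWalk

namespace Equiv.Perm

def MovesAlong {α : Type*} (r : α → α → Prop) (σ : Perm α) : Prop :=
  ∀ x, σ x ≠ x → r x (σ x)

variable {α : Type*} [Fintype α] [DecidableEq α] {r : α → α → Prop} {σ τ : Perm α}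

theorem MovesAlong.hasClosedWalk_card_support_cycleOf (hσ : MovesAlong r σ) {x : α}
    (hx : σ x ≠ x) : HasClosedWalk r #(σ.cycleOf x).support := by
  refine ⟨fun k => (σ ^ k) x, ?_, fun k _ => ?_⟩
  · simpa using (pow_mod_card_support_cycleOf_self_apply σ #(σ.cycleOf x).support x).symm
  · simp only [pow_succ', mul_apply]
    exact hσ _ (mem_support.mp (pow_apply_mem_support.mpr (mem_support.mpr hx)))

theorem MovesAlong.support_cycleOf_eq_univ (hσ : MovesAlong r σ) (hσ1 : σ ≠ 1)
    (hgirth : GirthAtLeast r (Fintype.card α)) (y : α) : (σ.cycleOf y).support = univ := by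
  obtain ⟨x, hx⟩ : ∃ x, σ x ≠ x := not_forall.mp fun h => hσ1 (Perm.ext h)
  have hx_mem : x ∈ (σ.cycleOf x).support :=
    mem_support_cycleOf_iff.mpr ⟨.refl σ x, mem_support.mpr hx⟩
  have hfull : (σ.cycleOf x).support = univ :=
    eq_univ_of_card _ <| le_antisymm (card_le_univ _)
      (hgirth _ (card_pos.mpr ⟨x, hx_mem⟩) (hσ.hasClosedWalk_card_support_cycleOf hx))
  rw [← (mem_support_cycleOf_iff.mp (hfull ▸ mem_univ y)).1.cycleOf_eq, hfull]

theorem MovesAlong.apply_ne_self (hσ : MovesAlong r σ) (hσ1 : σ ≠ 1)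
    (hgirth : GirthAtLeast r (Fintype.card α)) (y : α) : σ y ≠ y :=
  mem_support.mp <| support_cycleOf_le σ y <|
    (hσ.support_cycleOf_eq_univ hσ1 hgirth y).symm ▸ mem_univ y

theorem MovesAlong.eq_of_girthAtLeast_card (hσ : MovesAlong r σ) (hτ : MovesAlong r τ)
    (hσ1 : σ ≠ 1) (hτ1 : τ ≠ 1) (hgirth : GirthAtLeast r (Fintype.card α)) : σ = τ := by
  by_contra hne
  obtain ⟨i, hi⟩ : ∃ i, σ i ≠ τ i := not_forall.mp fun h => hne (Perm.ext h)
  have hσi := hσ.apply_ne_self hσ1 hgirth i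
  have hτi := hτ.support_cycleOf_eq_univ hτ1 hgirth i
  obtain ⟨a, ha, hai⟩ :=
    (mem_support_cycleOf_iff.mp (hτi ▸ mem_univ (σ i))).1.exists_pow_eq_of_mem_support
      (mem_support.mpr (hτ.apply_ne_self hτ1 hgirth i))
  rw [hτi, card_univ] at ha
  have ha0 : a ≠ 0 := by rintro rfl; exact hσi hai.symm
  have ha1 : a ≠ 1 := by rintro rfl; exact hi hai.symm
  have hper : (τ ^ Fintype.card α) i = i := by
    rw [← pow_mod_card_support_cycleOf_self_apply, hτi, card_univ, Nat.mod_self, pow_zero,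
      one_apply]
  -- the shortcut `i → σ i = τ^a i → τ^(a+1) i → ⋯ → τ^(card α) i = i`
  have := hgirth (Fintype.card α - a + 1) (by omega)
    ⟨fun | 0 => i | k + 1 => (τ ^ (a + k)) i, ?_, ?_⟩
  · omega
  · simpa [Nat.add_sub_cancel' ha.le] using hper
  · rintro (_ | k) hk
    · simpa [hai] using hσ i hσi
    · simpa [pow_succ', ← add_assoc] using hτ _ (hτ.apply_ne_self hτ1 hgirth _)

end Equiv.Perm

namespace Matrix

section OnePerms

variable {ι R : Type*} [Fintype ι] [DecidableEq ι] [CommRing R] {M : Matrix ι ι R}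

open Classical in
noncomputable def onePerms (M : Matrix ι ι R) : Finset (Perm ι) :=
  {σ | ∀ i, M i (σ i) = 1}

theorem mem_onePerms {σ : Perm ι} : σ ∈ onePerms M ↔ ∀ i, M i (σ i) = 1 := by
  simp [onePerms]

theorem det_eq_sum_sign_onePerms (hM : ∀ i j, M i j = 0 ∨ M i j = 1) :
    M.det = ((∑ σ ∈ onePerms M, (Perm.sign σ : ℤ) : ℤ) : R) := by
  rw [← det_transpose, det_apply, Int.cast_sum, ← sum_subset (subset_univ (onePerms M))]
  · refine sum_congr rfl fun σ hσ => ?_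
    simp [prod_eq_one fun i _ => mem_onePerms.mp hσ i, Units.smul_def]
  · intro σ _ hσ
    obtain ⟨i, hi⟩ := not_forall.mp fun h => hσ (mem_onePerms.mpr h)
    rw [prod_eq_zero (mem_univ i) ((hM i (σ i)).resolve_right hi), smul_zero]

theorem odd_card_of_odd_sum_sign {s : Finset (Perm ι)}
    (h : Odd (∑ σ ∈ s, (Perm.sign σ : ℤ))) : Odd #s := by
  have hsign (σ : Perm ι) : ((Perm.sign σ : ℤ) : ZMod 2) = 1 := by
    rcases Int.units_eq_one_or (Perm.sign σ) with h | h <;> simp [h]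
  rw [← ZMod.intCast_eq_one_iff_odd, Int.cast_sum] at h
  simpa [hsign, ZMod.natCast_eq_one_iff_odd] using h

theorem odd_card_onePerms [CharZero R] (hM : ∀ i j, M i j = 0 ∨ M i j = 1)
    (hodd : ∃ k : ℤ, Odd k ∧ M.det = k) : Odd #(onePerms M) := by
  obtain ⟨k, hk, hdet⟩ := hodd
  rw [det_eq_sum_sign_onePerms hM, Int.cast_inj] at hdet
  exact odd_card_of_odd_sum_sign (hdet ▸ hk)

end OnePerms

variable {m ι R : Type*} [Fintype ι] [DecidableEq ι] [CommRing R] {A : Matrix m m R}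

def offDiagAdj (A : Matrix m m R) (a b : m) : Prop :=
  a ≠ b ∧ A a b = 1

theorem movesAlong_of_mem_onePerms {g : ι → m} (hg : Function.Injective g) {σ : Perm ι}
    (hσ : σ ∈ onePerms (A.submatrix g g)) : σ.MovesAlong (fun a b => A.offDiagAdj (g a) (g b)) :=
  fun x hx => ⟨hg.ne hx.symm, mem_onePerms.mp hσ x⟩

theorem finRotate_mem_onePerms {ℓ : ℕ} {w : ℕ → m} (hw0 : w ℓ = w 0)
    (hw : ∀ k < ℓ, A (w k) (w (k + 1)) = 1) :
    finRotate ℓ ∈ onePerms (A.submatrix (fun i : Fin ℓ => w i) (fun i => w i)) := by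
  refine mem_onePerms.mpr fun i => ?_
  obtain _ | ℓ := ℓ
  · exact i.elim0
  have hnext : w (finRotate (ℓ + 1) i) = w (i + 1 : ℕ) := by
    rw [finRotate_apply, Fin.val_add_one]
    split_ifs with h
    · rw [h, Fin.val_last, ← hw0]
    · rfl
  show A (w i) (w (finRotate (ℓ + 1) i)) = 1
  rw [hnext]
  exact hw i i.2

theorem onePerms_submatrix_eq_one (hdiag : ∀ i, A i i = 1)
    (hacyc : ∀ ℓ, 0 < ℓ → ¬HasClosedWalk A.offDiagAdj ℓ) {g : ι → m}
    (hg : Function.Injective g) : onePerms (A.submatrix g g) = {1} := by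
  refine eq_singleton_iff_unique_mem.mpr ⟨mem_onePerms.mpr fun i => hdiag (g i), fun σ hσ => ?_⟩
  by_contra hσ1
  obtain ⟨x, hx⟩ : ∃ x, σ x ≠ x := not_forall.mp fun h => hσ1 (Perm.ext h)
  refine hacyc _ (card_pos.mpr ⟨x, ?_⟩)
    (((movesAlong_of_mem_onePerms hg hσ).hasClosedWalk_card_support_cycleOf hx).map g
      fun _ _ => id)
  exact Perm.mem_support_cycleOf_iff.mpr ⟨.refl σ x, Perm.mem_support.mpr hx⟩

theorem det_submatrix_eq_one (h01 : ∀ i j, A i j = 0 ∨ A i j = 1) (hdiag : ∀ i, A i i = 1)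
    (hacyc : ∀ ℓ, 0 < ℓ → ¬HasClosedWalk A.offDiagAdj ℓ) {g : ι → m}
    (hg : Function.Injective g) : (A.submatrix g g).det = 1 := by
  rw [det_eq_sum_sign_onePerms (M := A.submatrix g g) fun i j => h01 _ _,
    onePerms_submatrix_eq_one hdiag hacyc hg]
  simp

section Pminor

variable [Fintype m] [DecidableEq m]

theorem pminor_singleton (A : Matrix m m R) (i : m) : pminor A {i} = A i i := by
  simp [pminor]

theorem pminor_map (A : Matrix m m R) (g : ι ↪ m) :
    pminor A (univ.map g) = (A.submatrix g g).det := by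
  let e : ι ≃ univ.map g :=
    Equiv.ofBijective (fun i => ⟨g i, mem_map_of_mem g (mem_univ i)⟩)
      ⟨fun i j h => g.injective (congrArg Subtype.val h), fun ⟨_, hx⟩ => by
        obtain ⟨i, -, rfl⟩ := mem_map.mp hx; exact ⟨i, rfl⟩⟩
  exact (det_submatrix_equiv_self e _).symm

variable [CharZero R] (h01 : ∀ i j, A i j = 0 ∨ A i j = 1)
  (hodd : ∀ s : Finset m, ∃ k : ℤ, Odd k ∧ pminor A s = k)
include h01 hodd

theorem diag_eq_one_of_odd_pminor (i : m) : A i i = 1 := by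
  refine (h01 i i).resolve_left fun h => ?_
  obtain ⟨k, hk, hki⟩ := hodd {i}
  rw [pminor_singleton, h, eq_comm, Int.cast_eq_zero] at hki
  simp [hki] at hk

theorem not_hasClosedWalk_of_odd_pminor {ℓ : ℕ} (hℓ : 0 < ℓ) :
    ¬HasClosedWalk A.offDiagAdj ℓ := by
  classical
  intro hwalk
  have hex : ∃ ℓ, 0 < ℓ ∧ HasClosedWalk A.offDiagAdj ℓ := ⟨ℓ, hℓ, hwalk⟩
  obtain ⟨L, ⟨hpos, w, hw0, hw⟩, hgirth⟩ :
      ∃ L, (0 < L ∧ HasClosedWalk A.offDiagAdj L) ∧ GirthAtLeast A.offDiagAdj L :=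
    ⟨Nat.find hex, Nat.find_spec hex, fun k hk h => Nat.find_min' hex ⟨hk, h⟩⟩
  have hL : 2 ≤ L := by
    by_contra! h
    obtain rfl : L = 1 := by omega
    exact (hw 0 one_pos).1 hw0.symm
  let g : Fin L ↪ m := ⟨fun i => w i, fun i j h => Fin.ext (hgirth.injOn hw i.2 j.2 h)⟩
  have hrot : finRotate L ∈ onePerms (A.submatrix g g) :=
    finRotate_mem_onePerms hw0 fun k hk => (hw k hk).2
  have hrot1 : finRotate L ≠ 1 := (isCycle_finRotate_of_le hL).ne_one
  have hG : onePerms (A.submatrix g g) = {1, finRotate L} := by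
    refine Subset.antisymm (fun σ hσ => ?_) (insert_subset_iff.mpr ⟨mem_onePerms.mpr fun i =>
      diag_eq_one_of_odd_pminor h01 hodd _, singleton_subset_iff.mpr hrot⟩)
    by_cases hσ1 : σ = 1
    · simp [hσ1]
    · exact mem_insert_of_mem <| mem_singleton.mpr <|
        (movesAlong_of_mem_onePerms g.injective hσ).eq_of_girthAtLeast_card
          (movesAlong_of_mem_onePerms g.injective hrot) hσ1 hrot1
          (by simpa using hgirth.comap g)
  have hcard := odd_card_onePerms (M := A.submatrix g g) (fun i j => h01 _ _)
    (pminor_map A g ▸ hodd (univ.map g))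
  rw [hG, card_pair hrot1.symm] at hcard
  exact Nat.not_odd_iff_even.mpr even_two hcard

end Pminor

end Matrix

theorem stmt_4 {n : ℕ} (A : Matrix (Fin n) (Fin n) ℝ)
    (h01 : ∀ i j, A i j = 0 ∨ A i j = 1)
    (hodd : ∀ s : Finset (Fin n), ∃ m : ℤ, Odd m ∧ pminor A s = (m : ℝ)) :
    ∀ s : Finset (Fin n), pminor A s = 1 := fun _ =>
  det_submatrix_eq_one h01 (diag_eq_one_of_odd_pminor h01 hodd)
    (fun _ hℓ => not_hasClosedWalk_of_odd_pminor h01 hodd hℓ) Subtype.val_injective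
end

section
/- An n×n real matrix A with entries in {0,1} has all eigenvalues positive (real) if and only if all principal minors of A are equal to 1. -/
open Matrix

/-!
Positive eigenvalues `λ₁, …, λₙ` of a `0/1` matrix satisfy `∑ λᵢ = tr A ≤ n` and
`∏ λᵢ = det A ≥ 1`, the determinant being a positive integer; since `log λ ≤ λ - 1` with equality
only at `1`, all `λᵢ = 1`. Then `N = A - 1` is nilpotent with trace `0`, which forces the
diagonal of `A` to be `1` and `N ≥ 0` entrywise. A principal submatrix of a nonnegative nilpotent
matrix is again nilpotent, as its powers are dominated by those of `N`, so every principal minor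
of `A = 1 + N` is `1`.

Conversely, the coefficients of the characteristic polynomial are signed sums of principal
minors, so if all of them equal `1`, then `charpoly A = (X - 1)ⁿ`.
-/

open Polynomial

theorem Multiset.forall_eq_one_of_sum_le_card_of_one_le_prod {s : Multiset ℝ}
    (hpos : ∀ x ∈ s, 0 < x) (hsum : s.sum ≤ card s) (hprod : 1 ≤ s.prod) : ∀ x ∈ s, x = 1 := by
  by_contra! ⟨x, hx, hx1⟩
  have hlog : 0 ≤ (s.map Real.log).sum := by
    rw [← Real.log_multiset_prod fun y hy => (hpos y hy).ne']
    exact Real.log_nonneg hprod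
  have hlt : (s.map Real.log).sum < (s.map (· - 1)).sum :=
    Multiset.sum_lt_sum (fun y hy => Real.log_le_sub_one_of_pos (hpos y hy))
      ⟨x, hx, Real.log_lt_sub_one_of_pos (hpos x hx) hx1⟩
  have hsub : (s.map (· - 1)).sum = s.sum - card s := by
    simp [Multiset.sum_map_sub]
  linarith

namespace Matrix

variable {m n R : Type*} [Fintype m] [Fintype n] [DecidableEq m] [DecidableEq n]

theorem exists_intCast_det_eq [CommRing R] {A : Matrix m m R}
    (h : ∀ i j, ∃ k : ℤ, A i j = k) : ∃ k : ℤ, A.det = k := by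
  choose B hB using h
  refine ⟨(Matrix.of B).det, ?_⟩
  change _ = Int.castRingHom R _
  rw [RingHom.map_det]
  congr 1
  ext i j
  simp [hB]

section Nonneg

variable [Semiring R] [PartialOrder R] [IsOrderedRing R] {N : Matrix n n R}

theorem submatrix_pow_apply_le (hN : ∀ i j, 0 ≤ N i j) {f : m → n} (hf : f.Injective) (k : ℕ)
    (i j : m) : (N.submatrix f f ^ k) i j ≤ (N ^ k) (f i) (f j) := by
  induction k generalizing j with
  | zero =>
    by_cases hij : i = j
    · simp [hij]
    · simp [one_apply_ne hij, one_apply_ne (hf.ne hij)]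
  | succ k ih =>
    rw [pow_succ, pow_succ, mul_apply, mul_apply]
    calc ∑ l, (N.submatrix f f ^ k) i l * N (f l) (f j)
        ≤ ∑ l, (N ^ k) (f i) (f l) * N (f l) (f j) :=
          Finset.sum_le_sum fun l _ => mul_le_mul_of_nonneg_right (ih l) (hN _ _)
      _ = ∑ u ∈ Finset.univ.map ⟨f, hf⟩, (N ^ k) (f i) u * N u (f j) := by
          rw [Finset.sum_map]; rfl
      _ ≤ ∑ u, (N ^ k) (f i) u * N u (f j) :=
          Finset.sum_le_sum_of_subset_of_nonneg (Finset.subset_univ _)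
            fun u _ _ => mul_nonneg (pow_apply_nonneg hN k _ u) (hN u _)

theorem isNilpotent_submatrix_of_nonneg (hN : ∀ i j, 0 ≤ N i j) (hnil : IsNilpotent N)
    {f : m → n} (hf : f.Injective) : IsNilpotent (N.submatrix f f) := by
  obtain ⟨k, hk⟩ := hnil
  refine ⟨k, ext fun i j => le_antisymm ?_ (pow_apply_nonneg (fun _ _ => hN _ _) k i j)⟩
  simpa [hk] using submatrix_pow_apply_le hN hf k i j

end Nonneg

theorem sub_one_nonneg_of_isNilpotent [CommRing R] [PartialOrder R] [IsOrderedRing R]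
    [IsReduced R] {A : Matrix n n R}
    (h01 : ∀ i j, A i j = 0 ∨ A i j = 1) (hnil : IsNilpotent (A - 1)) (i j : n) :
    0 ≤ (A - 1) i j := by
  have hle : ∀ i, A i i - 1 ≤ 0 := fun i =>
    sub_nonpos.mpr <| (h01 i i).elim (fun h => h ▸ zero_le_one) le_of_eq
  have htrace : ∑ i, (A i i - 1) = 0 := by
    simpa [trace] using (isNilpotent_trace_of_isNilpotent hnil).eq_zero
  rcases eq_or_ne i j with rfl | hij
  · simpa using ((Finset.sum_eq_zero_iff_of_nonpos fun i _ => hle i).mp htrace i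
      (Finset.mem_univ i)).ge
  · rcases h01 i j with h | h <;> simp [one_apply_ne hij, h]

theorem det_one_add_of_isNilpotent [CommRing R] [IsDomain R] {N : Matrix n n R}
    (hN : IsNilpotent N) : (1 + N).det = 1 := by
  have hchar : N.charpoly = X ^ Fintype.card n :=
    sub_eq_zero.mp (isNilpotent_charpoly_sub_pow_of_isNilpotent hN).eq_zero
  -- evaluating `charpoly N = Xⁿ` at `-1` gives `(-1)ⁿ = det (-(1 + N))`
  have := N.eval_charpoly (-1)
  rw [hchar, eval_pow, eval_X, scalar_apply, ← smul_one_eq_diagonal, neg_one_smul, ← neg_add',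
    det_neg] at this
  simpa using this.symm

theorem pminor_one_add_eq_one_of_nonneg_of_isNilpotent [CommRing R] [PartialOrder R]
    [IsOrderedRing R] [IsDomain R] {N : Matrix n n R} (hN : ∀ i j, 0 ≤ N i j)
    (hnil : IsNilpotent N) (s : Finset n) : pminor (1 + N) s = 1 := by
  have hone : (1 : Matrix n n R).submatrix (Subtype.val : s → n) Subtype.val = 1 :=
    submatrix_one _ Subtype.val_injective
  rw [pminor, submatrix_add, Pi.add_apply, Pi.add_apply, hone]
  exact det_one_add_of_isNilpotent (isNilpotent_submatrix_of_nonneg hN hnil Subtype.val_injective)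

theorem charpoly_eq_X_sub_one_pow_of_pminor_eq_one [CommRing R] {M : Matrix n n R}
    (h : ∀ s, pminor M s = 1) : M.charpoly = (X - 1) ^ Fintype.card n := by
  nontriviality R
  rw [sub_eq_add_neg, ← C_1, ← C_neg]
  ext j
  rcases le_or_gt j (Fintype.card n) with hj | hj
  · obtain ⟨k, hk, rfl⟩ : ∃ k ≤ Fintype.card n, j = Fintype.card n - k :=
      ⟨_, Nat.sub_le _ j, (Nat.sub_sub_self hj).symm⟩
    rw [charpoly_coeff_eq_sum_minors M k hk, coeff_X_add_C_pow, Nat.sub_sub_self hk,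
      Nat.choose_symm hk]
    simp only [pminor] at h
    simp [h]
  · rw [coeff_eq_zero_of_natDegree_lt (by rwa [charpoly_natDegree_eq_dim]),
      coeff_eq_zero_of_natDegree_lt (by rwa [natDegree_pow_X_add_C])]

theorem exists_pos_real_roots_charpoly {A : Matrix m m ℝ}
    (hspec : ∀ z ∈ spectrum ℂ (A.map Complex.ofReal), z.im = 0 ∧ 0 < z.re) :
    ∃ r : Multiset ℝ, (A.map Complex.ofReal).charpoly.roots = r.map Complex.ofReal ∧
      ∀ x ∈ r, 0 < x := by
  have hroot : ∀ z ∈ (A.map Complex.ofReal).charpoly.roots, z.im = 0 ∧ 0 < z.re :=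
    fun z hz => hspec z (mem_spectrum_iff_isRoot_charpoly.mpr (isRoot_of_mem_roots hz))
  refine ⟨(A.map Complex.ofReal).charpoly.roots.map Complex.re, ?_, fun x hx => ?_⟩
  · rw [Multiset.map_map]
    conv_lhs => rw [← Multiset.map_id (A.map Complex.ofReal).charpoly.roots]
    exact Multiset.map_congr rfl fun z hz => Complex.ext rfl (by simp [(hroot z hz).1])
  · obtain ⟨z, hz, rfl⟩ := Multiset.mem_map.mp hx
    exact (hroot z hz).2

theorem charpoly_eq_X_sub_one_pow_of_spectrum {A : Matrix m m ℝ}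
    (hspec : ∀ z ∈ spectrum ℂ (A.map Complex.ofReal), z.im = 0 ∧ 0 < z.re)
    (htrace : A.trace ≤ Fintype.card m) (hdet : ∃ k : ℤ, A.det = k) :
    A.charpoly = (X - 1) ^ Fintype.card m := by
  obtain ⟨r, hr, hpos⟩ := exists_pos_real_roots_charpoly hspec
  have hsplit : (A.map Complex.ofReal).charpoly.Splits := IsAlgClosed.splits _
  have hcard : Multiset.card r = Fintype.card m := by
    rw [← Multiset.card_map Complex.ofReal, ← hr, ← hsplit.natDegree_eq_card_roots,
      charpoly_natDegree_eq_dim]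
  have htr : A.trace = r.sum := Complex.ofReal_injective <| by
    change Complex.ofRealHom _ = Complex.ofRealHom _
    rw [AddMonoidHom.map_trace, map_multiset_sum]
    exact (trace_eq_sum_roots_charpoly _).trans (congrArg _ hr)
  have hdet' : A.det = r.prod := Complex.ofReal_injective <| by
    change Complex.ofRealHom _ = Complex.ofRealHom _
    rw [RingHom.map_det, map_multiset_prod]
    exact (det_eq_prod_roots_charpoly _).trans (congrArg _ hr)
  have hone : ∀ x ∈ r, x = 1 := by
    refine Multiset.forall_eq_one_of_sum_le_card_of_one_le_prod hpos (by rwa [hcard, ← htr]) ?_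
    obtain ⟨k, hk⟩ := hdet
    have hk0 : (0 : ℝ) < k := hk ▸ hdet' ▸ Multiset.prod_pos hpos
    rw [← hdet', hk]
    exact_mod_cast Int.cast_pos.mp hk0
  have hroots : (A.map Complex.ofReal).charpoly.roots = Multiset.replicate (Fintype.card m) 1 := by
    rw [hr, Multiset.eq_replicate, Multiset.card_map, hcard]
    refine ⟨rfl, fun z hz => ?_⟩
    obtain ⟨x, hx, rfl⟩ := Multiset.mem_map.mp hz
    simp [hone x hx]
  apply Polynomial.map_injective Complex.ofRealHom Complex.ofReal_injective
  rw [← charpoly_map]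
  change (A.map Complex.ofReal).charpoly = _
  rw [hsplit.eq_prod_roots_of_monic (charpoly_monic _)]
  simp [hroots]

end Matrix

theorem stmt_6 {n : ℕ} (A : Matrix (Fin n) (Fin n) ℝ)
    (h01 : ∀ i j, A i j = 0 ∨ A i j = 1) :
    (∀ z ∈ spectrum ℂ (A.map (Complex.ofReal)), z.im = 0 ∧ 0 < z.re) ↔
      (∀ s : Finset (Fin n), pminor A s = 1) := by
  constructor
  · intro hspec s
    have htrace : A.trace ≤ Fintype.card (Fin n) := by
      simpa [trace] using Finset.sum_le_sum fun i (_ : i ∈ Finset.univ) =>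
        (h01 i i).elim (fun h => h ▸ zero_le_one) le_of_eq
    have hdet : ∃ k : ℤ, A.det = k := exists_intCast_det_eq fun i j =>
      (h01 i j).elim (fun h => ⟨0, by simp [h]⟩) (fun h => ⟨1, by simp [h]⟩)
    have hchar := charpoly_eq_X_sub_one_pow_of_spectrum hspec htrace hdet
    have hnil : IsNilpotent (A - 1) :=
      ⟨Fintype.card (Fin n), by simpa [hchar] using A.aeval_self_charpoly⟩
    simpa using pminor_one_add_eq_one_of_nonneg_of_isNilpotent
      (sub_one_nonneg_of_isNilpotent h01 hnil) hnil s
  · intro h z hz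
    rw [mem_spectrum_iff_isRoot_charpoly] at hz
    change (A.map Complex.ofRealHom).charpoly.IsRoot z at hz
    rw [charpoly_map, charpoly_eq_X_sub_one_pow_of_pminor_eq_one h] at hz
    obtain ⟨rfl, -⟩ : z = 1 ∧ n ≠ 0 := by simpa [sub_eq_zero] using hz
    simp
end

section
/- Let Rₙ denote the number of acyclic digraphs on n labeled vertices, with R₀ = 1. Then for n ≥ 1, Rₙ = Σ_{k=1}^{n} (−1)^{k+1} C(n,k) 2^{k(n−k)} R_{n−k}. -/
open Matrix

/-- The number of acyclic digraphs on `n` labeled vertices. -/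
noncomputable def numAcyclic (n : ℕ) : ℕ :=
  Nat.card {G : Fin n → Fin n → Bool // (∀ i, G i i = false) ∧ IsAcyclicDigraph G}

/-!
Every acyclic digraph on a nonempty vertex set has a source, so for acyclic `G` with set of
sources `s(G)` the alternating sum `∑_{T ⊆ s(G)} (-1)^|T|` vanishes. Summing over `G` and swapping
the sums, `∑_T (-1)^|T| #{G acyclic | T ⊆ s(G)} = 0`. An acyclic digraph in which every vertex of
`T` is a source amounts to an arbitrary set of edges from `T` to its complement together with an
acyclic digraph on the complement, so for `|T| = k` the count is `2^(k(n-k)) R_(n-k)`; the term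
`T = ∅` is `R_n`.
-/

open Finset Relation

theorem sum_neg_one_pow_card_mul_card_subset_eq_zero {α ι : Type*} [Fintype α] [Fintype ι]
    [DecidableEq ι] (p : α → Prop) (f : α → Finset ι) (hf : ∀ a, p a → (f a).Nonempty) :
    ∑ T : Finset ι, (-1 : ℤ) ^ #T * Nat.card {a // p a ∧ T ⊆ f a} = 0 := by
  classical
  calc ∑ T : Finset ι, (-1 : ℤ) ^ #T * Nat.card {a // p a ∧ T ⊆ f a}
      = ∑ a with p a, ∑ T ∈ (f a).powerset, (-1 : ℤ) ^ #T := by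
        simp only [Nat.card_eq_fintype_card, Fintype.card_subtype, ← filter_filter,
          natCast_card_filter, mul_sum, mul_boole]
        rw [sum_comm]
        simp_rw [← mem_powerset, sum_ite_mem, univ_inter]
    _ = 0 := sum_eq_zero fun a ha =>
        sum_powerset_neg_one_pow_card_of_nonempty (hf a (mem_filter.1 ha).2)

section AcyclicAdj

variable {V W : Type*}

def IsAcyclicAdj (G : V → V → Bool) : Prop :=
  ∀ v, ¬ TransGen (fun a b => G a b = true) v v

theorem IsAcyclicAdj.adj_self {G : V → V → Bool} (hG : IsAcyclicAdj G) (v : V) :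
    G v v = false :=
  Bool.eq_false_iff.2 fun h => hG v (.single h)

theorem IsAcyclicAdj.comap {G : V → V → Bool} (hG : IsAcyclicAdj G) (f : W → V) :
    IsAcyclicAdj fun a b => G (f a) (f b) :=
  fun w h => hG (f w) (TransGen.lift f (fun _ _ => id) w w h)

theorem isAcyclicAdj_comap_equiv_iff {G : V → V → Bool} (e : W ≃ V) :
    (IsAcyclicAdj fun a b => G (e a) (e b)) ↔ IsAcyclicAdj G :=
  ⟨fun h => by simpa using h.comap e.symm, fun h => h.comap e⟩

def acyclicAdjCongr (e : W ≃ V) :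
    {G : W → W → Bool // IsAcyclicAdj G} ≃ {G : V → V → Bool // IsAcyclicAdj G} :=
  (Equiv.arrowCongr e (Equiv.arrowCongr e (Equiv.refl Bool))).subtypeEquiv fun G => by
    rw [← isAcyclicAdj_comap_equiv_iff e]
    simp

variable [Fintype V]

def sources (G : V → V → Bool) : Finset V :=
  {v | ∀ u, G u v = false}

theorem IsAcyclicAdj.sources_nonempty [Nonempty V] {G : V → V → Bool} (hG : IsAcyclicAdj G) :
    (sources G).Nonempty := by
  let r := TransGen fun a b => G a b = true
  have : IsTrans V r := ⟨fun _ _ _ => TransGen.trans⟩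
  have : Std.Irrefl r := ⟨hG⟩
  obtain ⟨v, -, hmin⟩ :=
    (Finite.wellFounded_of_trans_of_irrefl r).has_min Set.univ Set.univ_nonempty
  exact ⟨v, by simpa [sources] using fun u huv => hmin u trivial (.single huv)⟩

theorem numAcyclic_card_eq :
    numAcyclic (Fintype.card V) = Nat.card {G : V → V → Bool // IsAcyclicAdj G} := by
  rw [numAcyclic, ← Nat.card_congr (acyclicAdjCongr (Fintype.equivFin V).symm)]
  exact Nat.card_congr <| Equiv.subtypeEquivRight fun G =>
    and_iff_right_of_imp fun hG => IsAcyclicAdj.adj_self hG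

end AcyclicAdj

section Join

variable {A B : Type*}

def joinAdj (E : A → B → Bool) (H : B → B → Bool) : A ⊕ B → A ⊕ B → Bool
  | _, .inl _ => false
  | .inl a, .inr b => E a b
  | .inr b, .inr b' => H b b'

theorem transGen_joinAdj_inr {E : A → B → Bool} {H : B → B → Bool} {b : B} {y : A ⊕ B}
    (h : TransGen (fun u v => joinAdj E H u v = true) (.inr b) y) :
    ∃ b', y = .inr b' ∧ TransGen (fun u v => H u v = true) b b' := by
  induction h with
  | @single y hy =>
    rcases y with a | b'
    · simp [joinAdj] at hy
    · exact ⟨b', rfl, .single hy⟩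
  | @tail y z _ hyz ih =>
    obtain ⟨b', rfl, hbb'⟩ := ih
    rcases z with a | c
    · simp [joinAdj] at hyz
    · exact ⟨c, rfl, hbb'.tail hyz⟩

theorem isAcyclicAdj_joinAdj (E : A → B → Bool) {H : B → B → Bool} (hH : IsAcyclicAdj H) :
    IsAcyclicAdj (joinAdj E H) := by
  intro x hx
  obtain ⟨y, -, hyx⟩ := TransGen.tail'_iff.1 hx
  cases x with
  | inl a => cases y <;> simp [joinAdj] at hyx
  | inr b =>
    obtain ⟨b', hb', hbb'⟩ := transGen_joinAdj_inr hx
    cases Sum.inr_injective hb'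
    exact hH b hbb'

def acyclicSumEquiv (A B : Type*) :
    {G : A ⊕ B → A ⊕ B → Bool // IsAcyclicAdj G ∧ ∀ x a, G x (.inl a) = false} ≃
      (A → B → Bool) × {H : B → B → Bool // IsAcyclicAdj H} where
  toFun G :=
    (fun a b => G.1 (.inl a) (.inr b), ⟨fun b b' => G.1 (.inr b) (.inr b'), G.2.1.comap _⟩)
  invFun p := ⟨joinAdj p.1 p.2, isAcyclicAdj_joinAdj p.1 p.2.2, fun x _ => by cases x <;> rfl⟩
  left_inv G := by
    ext x y
    cases x <;> cases y <;> simp [joinAdj, G.2.2]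
  right_inv _ := rfl

end Join

section Count

variable {V : Type*} [Fintype V] [DecidableEq V]

theorem card_acyclicAdj_subset_sources (S : Finset V) :
    Nat.card {G : V → V → Bool // IsAcyclicAdj G ∧ S ⊆ sources G} =
      2 ^ (#S * (Fintype.card V - #S)) * numAcyclic (Fintype.card V - #S) := by
  let e := Equiv.sumCompl (· ∈ S)
  have hsplit : {G : V → V → Bool // IsAcyclicAdj G ∧ S ⊆ sources G} ≃
      {G : {v // v ∈ S} ⊕ {v // v ∉ S} → _ → Bool //
        IsAcyclicAdj G ∧ ∀ x a, G x (.inl a) = false} :=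
    (Equiv.arrowCongr e.symm (Equiv.arrowCongr e.symm (.refl Bool))).subtypeEquiv fun G =>
      and_congr (isAcyclicAdj_comap_equiv_iff e).symm
        ⟨fun h x a => (mem_filter.1 (h a.2)).2 (e x),
          fun h v hv => mem_filter.2 ⟨mem_univ v, fun u => by
            simpa [e] using h (e.symm u) ⟨v, hv⟩⟩⟩
  rw [Nat.card_congr (hsplit.trans (acyclicSumEquiv _ _)), Nat.card_prod, Nat.card_fun,
    Nat.card_fun, ← numAcyclic_card_eq]
  simp only [Nat.card_eq_fintype_card, Fintype.card_bool, Fintype.card_subtype_compl,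
    Fintype.card_coe, ← pow_mul, mul_comm]

end Count

theorem stmt_7 (n : ℕ) (hn : 1 ≤ n) :
    (numAcyclic n : ℤ) =
      ∑ k ∈ Finset.Icc 1 n,
        (-1 : ℤ) ^ (k + 1) * (n.choose k) * 2 ^ (k * (n - k)) * numAcyclic (n - k) := by
  have : Nonempty (Fin n) := ⟨⟨0, hn⟩⟩
  have hsum := sum_neg_one_pow_card_mul_card_subset_eq_zero IsAcyclicAdj sources
    fun (G : Fin n → Fin n → Bool) hG => hG.sources_nonempty
  simp only [card_acyclicAdj_subset_sources, Fintype.card_fin] at hsum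
  rw [← powerset_univ, sum_powerset_apply_card
      (fun k => (-1 : ℤ) ^ k * ((2 ^ (k * (n - k)) * numAcyclic (n - k) : ℕ) : ℤ)),
    card_univ, Fintype.card_fin, range_eq_Ico, sum_eq_sum_Ico_succ_bot (by omega),
    Ico_add_one_right_eq_Icc] at hsum
  simp only [Nat.choose_zero_right, pow_zero, tsub_zero, zero_mul, one_mul, Int.nsmul_eq_mul,
    Nat.cast_one, zero_add, Nat.cast_mul, Nat.cast_pow, Nat.cast_ofNat] at hsum
  rw [eq_neg_of_add_eq_zero_left hsum, ← sum_neg_distrib]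
  exact sum_congr rfl fun k _ => by ring
end
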